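/- arXiv:1706.05118 — 3 statements merged into one kernel-verified Lean document; each statement's English description precedes it below -/
import Mathlib

section
/- Let q_1, q_2, q_3 be three distinct points in ℝ³ and let w = (w', w'') ∈ ℝ³ × ℝ³ = ℝ⁶ be a point lying on each of the double-spheres Z_{q_i} = S_{q_i} × S_{q_i} (where S_q denotes the unit sphere centered at q). Then the sum of the tangent spaces T_w Z_{q_1} + T_w Z_{q_2} + T_w Z_{q_3} is all of ℝ⁶. -/
/-!
Every tangent space to a sphere through `w` is the orthogonal complement of a radius `w - q`.
Three distinct centres at the same distance from `w` give three distinct radii of equal length,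
and two of them are not antipodal, hence not parallel. Their complements are two distinct
hyperplanes, which already span the whole space; this happens in each factor of `Z_p = S_p × S_p`.
-/

/-- The tangent space to the unit sphere centered at `p` at the point `u`:
`{v : v ⬝ (u - p) = 0}`. -/
noncomputable def TS (p u : EuclideanSpace ℝ (Fin 3)) :
    Submodule ℝ (EuclideanSpace ℝ (Fin 3)) := (Submodule.span ℝ {u - p})ᗮ

/-- The tangent space to the double-sphere `Z_p = S_p × S_p` at `w = (w₁, w₂)`. -/
noncomputable def TZ (p w₁ w₂ : EuclideanSpace ℝ (Fin 3)) :
    Submodule ℝ (EuclideanSpace ℝ (Fin 3) × EuclideanSpace ℝ (Fin 3)) :=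
  (TS p w₁).prod (TS p w₂)

theorem Submodule.orthogonal_sup_orthogonal_eq_top_of_disjoint {𝕜 E : Type*} [RCLike 𝕜]
    [NormedAddCommGroup E] [InnerProductSpace 𝕜 E] [FiniteDimensional 𝕜 E]
    {K L : Submodule 𝕜 E} (h : Disjoint K L) : Kᗮ ⊔ Lᗮ = ⊤ := by
  rw [← Submodule.orthogonal_eq_bot_iff, ← Submodule.inf_orthogonal, K.orthogonal_orthogonal,
    L.orthogonal_orthogonal, h.eq_bot]

theorem eq_or_eq_neg_of_mem_span_singleton_of_norm_eq {E : Type*} [NormedAddCommGroup E]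
    [NormedSpace ℝ E] {a b : E} (hab : ‖a‖ = ‖b‖) (hb : b ∈ ℝ ∙ a) : b = a ∨ b = -a := by
  obtain ⟨t, rfl⟩ := Submodule.mem_span_singleton.1 hb
  rcases eq_or_ne a 0 with rfl | ha
  · simp
  have ht : |t| = 1 := by
    rw [norm_smul, Real.norm_eq_abs] at hab
    exact (mul_eq_right₀ (norm_ne_zero_iff.2 ha)).1 hab.symm
  rcases abs_eq zero_le_one |>.1 ht with rfl | rfl <;> simp

section EqualNorms

variable {E : Type*} [NormedAddCommGroup E] [InnerProductSpace ℝ E] [FiniteDimensional ℝ E]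

theorem orthogonal_span_singleton_sup_eq_top_of_norm_eq {a b : E} (hab : ‖a‖ = ‖b‖)
    (hne : b ≠ a) (hne_neg : b ≠ -a) : (ℝ ∙ a)ᗮ ⊔ (ℝ ∙ b)ᗮ = ⊤ := by
  have hb : b ≠ 0 := by
    rintro rfl
    exact hne (norm_eq_zero.1 (hab.trans norm_zero)).symm
  refine Submodule.orthogonal_sup_orthogonal_eq_top_of_disjoint ?_
  rw [Submodule.disjoint_span_singleton' hb]
  intro hmem
  exact (eq_or_eq_neg_of_mem_span_singleton_of_norm_eq hab hmem).elim hne hne_neg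

/-- Of three distinct vectors of equal length, at most one is `-u₁`. -/
theorem orthogonal_span_singleton_sup_sup_eq_top_of_norm_eq {u₁ u₂ u₃ : E}
    (h₁₂ : ‖u₁‖ = ‖u₂‖) (h₁₃ : ‖u₁‖ = ‖u₃‖) (hne₁₂ : u₁ ≠ u₂) (hne₁₃ : u₁ ≠ u₃)
    (hne₂₃ : u₂ ≠ u₃) : (ℝ ∙ u₁)ᗮ ⊔ (ℝ ∙ u₂)ᗮ ⊔ (ℝ ∙ u₃)ᗮ = ⊤ := by
  by_cases hanti : u₂ = -u₁
  · have h₁₃' : u₃ ≠ -u₁ := hanti ▸ hne₂₃.symm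
    refine top_unique (le_trans ?_ (sup_le_sup_right le_sup_left _))
    rw [orthogonal_span_singleton_sup_eq_top_of_norm_eq h₁₃ hne₁₃.symm h₁₃']
  · refine top_unique (le_trans ?_ le_sup_left)
    rw [orthogonal_span_singleton_sup_eq_top_of_norm_eq h₁₂ hne₁₂.symm hanti]

end EqualNorms

theorem TS_sup_TS_sup_TS_eq_top {q₁ q₂ q₃ w : EuclideanSpace ℝ (Fin 3)} {r : ℝ}
    (hq₁₂ : q₁ ≠ q₂) (hq₁₃ : q₁ ≠ q₃) (hq₂₃ : q₂ ≠ q₃)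
    (h₁ : dist w q₁ = r) (h₂ : dist w q₂ = r) (h₃ : dist w q₃ = r) :
    TS q₁ w ⊔ TS q₂ w ⊔ TS q₃ w = ⊤ := by
  rw [dist_eq_norm] at h₁ h₂ h₃
  exact orthogonal_span_singleton_sup_sup_eq_top_of_norm_eq (h₁.trans h₂.symm)
    (h₁.trans h₃.symm) (sub_right_injective.ne hq₁₂) (sub_right_injective.ne hq₁₃)
    (sub_right_injective.ne hq₂₃)

theorem stmt2 (q₁ q₂ q₃ : EuclideanSpace ℝ (Fin 3))
    (hq12 : q₁ ≠ q₂) (hq13 : q₁ ≠ q₃) (hq23 : q₂ ≠ q₃)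
    (w₁ w₂ : EuclideanSpace ℝ (Fin 3))
    (h1 : dist w₁ q₁ = 1 ∧ dist w₂ q₁ = 1)
    (h2 : dist w₁ q₂ = 1 ∧ dist w₂ q₂ = 1)
    (h3 : dist w₁ q₃ = 1 ∧ dist w₂ q₃ = 1) :
    TZ q₁ w₁ w₂ ⊔ TZ q₂ w₁ w₂ ⊔ TZ q₃ w₁ w₂ = ⊤ := by
  rw [TZ, TZ, TZ, Submodule.prod_sup_prod, Submodule.prod_sup_prod,
    TS_sup_TS_sup_TS_eq_top hq12 hq13 hq23 h1.1 h2.1 h3.1,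
    TS_sup_TS_sup_TS_eq_top hq12 hq13 hq23 h1.2 h2.2 h3.2, Submodule.prod_top]
end

section
/- Let q_1, q_2 ∈ ℝ³ and let w ∈ Z_{q_1} ∩ Z_{q_2}, where Z_q = S_q × S_q is the double-sphere over the unit sphere S_q centered at q. Then the dimension of the intersection of tangent spaces T_w Z_{q_1} ∩ T_w Z_{q_2} is an even integer. -/
noncomputable def myProdEquiv {R M N : Type*} [Field R] [AddCommGroup M] [AddCommGroup N]
    [Module R M] [Module R N] (p : Submodule R M) (q : Submodule R N) :
    (p.prod q) ≃ₗ[R] p × q where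
  toFun x := (⟨x.1.1, x.2.1⟩, ⟨x.1.2, x.2.2⟩)
  invFun x := ⟨(x.1.1, x.2.1), x.1.2, x.2.2⟩
  left_inv _ := rfl
  right_inv _ := rfl
  map_add' _ _ := rfl
  map_smul' _ _ := rfl

lemma my_finrank_prod {R M N : Type*} [Field R] [AddCommGroup M] [AddCommGroup N]
    [Module R M] [Module R N] [FiniteDimensional R M] [FiniteDimensional R N]
    (p : Submodule R M) (q : Submodule R N) :
    Module.finrank R (p.prod q) = Module.finrank R p + Module.finrank R q := by
  rw [(myProdEquiv p q).finrank_eq, Module.finrank_prod]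

lemma my_prod_inf_prod {R M N : Type*} [Field R] [AddCommGroup M] [AddCommGroup N]
    [Module R M] [Module R N] (p p' : Submodule R M) (q q' : Submodule R N) :
    p.prod q ⊓ p'.prod q' = (p ⊓ p').prod (q ⊓ q') := by
  ext x
  simp [Submodule.mem_prod, and_assoc, and_left_comm]

open scoped Classical in
lemma dim_TS_inter (q₁ q₂ w : EuclideanSpace ℝ (Fin 3))
    (hw1 : dist w q₁ = 1) (hw2 : dist w q₂ = 1) :
    Module.finrank ℝ ↥(TS q₁ w ⊓ TS q₂ w) =
      if q₁ = q₂ ∨ dist q₁ q₂ = 2 then 2 else 1 := by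
  have ha : ‖w - q₁‖ = 1 := by rwa [← dist_eq_norm]
  have hb : ‖w - q₂‖ = 1 := by rwa [← dist_eq_norm]
  set a := w - q₁ with ha'
  set b := w - q₂ with hb'
  have ha0 : a ≠ 0 := by intro h; rw [h, norm_zero] at ha; norm_num at ha
  have hb0 : b ≠ 0 := by intro h; rw [h, norm_zero] at hb; norm_num at hb
  have hsub : a - b = q₂ - q₁ := by rw [ha', hb']; abel
  have key : TS q₁ w ⊓ TS q₂ w = (Submodule.span ℝ {a, b})ᗮ := by
    rw [TS, TS, Submodule.inf_orthogonal,
      show ({a, b} : Set (EuclideanSpace ℝ (Fin 3))) = insert a {b} from rfl,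
      Submodule.span_insert]
  have horth : ∀ K : Submodule ℝ (EuclideanSpace ℝ (Fin 3)),
      Module.finrank ℝ K + Module.finrank ℝ Kᗮ = 3 := fun K => by
    have := K.finrank_add_finrank_orthogonal
    simpa using this
  rw [key]
  split_ifs with h
  · have hspan : Submodule.span ℝ ({a, b} : Set (EuclideanSpace ℝ (Fin 3)))
        = Submodule.span ℝ {a} := by
      rcases h with h | h
      · have : b = a := by rw [ha', hb', h]
        rw [this]; simp
      · -- b = -a via parallelogram law
        have hab : ‖a - b‖ = 2 := by rw [hsub, ← dist_eq_norm, dist_comm]; exact h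
        have hpar := parallelogram_law_with_norm ℝ a b
        have : ‖a + b‖ = 0 := by nlinarith [norm_nonneg (a + b)]
        have hba : b = -a := eq_neg_of_add_eq_zero_right (norm_eq_zero.mp this)
        rw [hba]
        simp [Submodule.span_insert, Submodule.mem_span_singleton_self]
    have h1 : Module.finrank ℝ (Submodule.span ℝ ({a, b} : Set (EuclideanSpace ℝ (Fin 3)))) = 1 := by
      rw [hspan, finrank_span_singleton ha0]
    have := horth (Submodule.span ℝ ({a, b} : Set (EuclideanSpace ℝ (Fin 3))))
    omega
  · push_neg at h
    have hli : LinearIndependent ℝ ![a, b] := by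
      rw [linearIndependent_fin2]
      refine ⟨by simpa using hb0, fun c hc => ?_⟩
      simp only [Matrix.cons_val_one, Matrix.head_cons, Matrix.cons_val_zero] at hc
      have hc1 : |c| = 1 := by
        have : ‖c • b‖ = 1 := by rw [hc]; exact ha
        rwa [norm_smul, hb, mul_one, Real.norm_eq_abs] at this
      rcases abs_eq (by norm_num : (0:ℝ) ≤ 1) |>.mp hc1 with rfl | rfl
      · rw [one_smul] at hc
        apply h.1
        have : w - q₁ = w - q₂ := by rw [← ha', ← hb', hc]
        exact sub_right_injective this
      · apply h.2
        rw [neg_one_smul] at hc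
        have : a - b = -b - b := by rw [hc]
        rw [hsub] at this
        have h2 : ‖q₂ - q₁‖ = 2 := by
          rw [this, show -b - b = -(2:ℝ) • b by module, norm_smul, hb]
          norm_num
        rw [dist_comm, dist_eq_norm]; exact h2
    have hrange : ({a, b} : Set (EuclideanSpace ℝ (Fin 3))) = Set.range ![a, b] := by
      ext x
      simp [Fin.exists_fin_two, or_comm]
    have h2 : Module.finrank ℝ (Submodule.span ℝ ({a, b} : Set (EuclideanSpace ℝ (Fin 3)))) = 2 := by
      rw [hrange, finrank_span_eq_card hli]
      simp
    have := horth (Submodule.span ℝ ({a, b} : Set (EuclideanSpace ℝ (Fin 3))))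
    omega

theorem stmt3 (q₁ q₂ : EuclideanSpace ℝ (Fin 3)) (w₁ w₂ : EuclideanSpace ℝ (Fin 3))
    (h1 : dist w₁ q₁ = 1 ∧ dist w₂ q₁ = 1)
    (h2 : dist w₁ q₂ = 1 ∧ dist w₂ q₂ = 1) :
    Even (Module.finrank ℝ ↥(TZ q₁ w₁ w₂ ⊓ TZ q₂ w₁ w₂)) := by
  rw [TZ, TZ, my_prod_inf_prod, my_finrank_prod,
    dim_TS_inter q₁ q₂ w₁ h1.1 h2.1, dim_TS_inter q₁ q₂ w₂ h1.2 h2.2]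
  split_ifs <;> decide
end

section
/- Let W be a 5-dimensional real algebraic variety in ℝ⁶ (viewed as ℝ³ × ℝ³) and let w ∈ W be a regular point, so that near w, W is a smooth 5-dimensional manifold with tangent space T_w W. Let q_1, q_2, q_3 ∈ ℝ³ be distinct points with w ∈ Z_{q_i} for i = 1,2,3, where Z_q = S_q × S_q is the double-sphere over the unit sphere S_q. Then dim(T_w Z_{q_i} ∩ T_w W) ≤ 3 for at least one index i. -/
private lemma span_inf_bot (q₁ q₂ q₃ w : EuclideanSpace ℝ (Fin 3))
    (hq12 : q₁ ≠ q₂) (hq13 : q₁ ≠ q₃) (hq23 : q₂ ≠ q₃)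
    (h1 : dist w q₁ = 1) (h2 : dist w q₂ = 1) (h3 : dist w q₃ = 1) :
    Submodule.span ℝ {w - q₁} ⊓ Submodule.span ℝ {w - q₂} ⊓ Submodule.span ℝ {w - q₃} = ⊥ := by
  rw [eq_bot_iff]
  rintro x ⟨⟨hx1, hx2⟩, hx3⟩
  simp only [Submodule.mem_bot]
  by_contra hx
  simp only [SetLike.mem_coe, Submodule.mem_span_singleton] at hx1 hx2 hx3
  obtain ⟨a, ha⟩ := hx1; obtain ⟨b, hb⟩ := hx2; obtain ⟨c, hc⟩ := hx3
  have hn1 : ‖w - q₁‖ = 1 := by rw [← dist_eq_norm]; exact h1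
  have hn2 : ‖w - q₂‖ = 1 := by rw [← dist_eq_norm]; exact h2
  have hn3 : ‖w - q₃‖ = 1 := by rw [← dist_eq_norm]; exact h3
  have ha0 : a ≠ 0 := by rintro rfl; simp at ha; exact hx ha.symm
  have hb0 : b ≠ 0 := by rintro rfl; simp at hb; exact hx hb.symm
  have hc0 : c ≠ 0 := by rintro rfl; simp at hc; exact hx hc.symm
  have key : ∀ (s t : ℝ) (u v : EuclideanSpace ℝ (Fin 3)),
      s ≠ 0 → t ≠ 0 → s • u = t • v → ‖u‖ = 1 → ‖v‖ = 1 → v = u ∨ v = -u := by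
    intro s t u v hs ht hst hu hv
    have hveq : v = (t⁻¹ * s) • u := by
      rw [mul_smul, hst, ← mul_smul, inv_mul_cancel₀ ht, one_smul]
    have habs : |t⁻¹ * s| = 1 := by
      have := congrArg norm hveq
      rw [norm_smul, hu, hv, Real.norm_eq_abs, mul_one] at this
      exact this.symm
    rcases abs_eq (by norm_num : (0:ℝ) ≤ 1) |>.mp habs with h | h
    · left; rw [hveq, h, one_smul]
    · right; rw [hveq, h, neg_one_smul]
  have h12 := key a b (w - q₁) (w - q₂) ha0 hb0 (ha.trans hb.symm) hn1 hn2
  have h13 := key a c (w - q₁) (w - q₃) ha0 hc0 (ha.trans hc.symm) hn1 hn3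
  rcases h12 with h | h
  · exact hq12 (sub_right_injective h).symm
  · rcases h13 with h' | h'
    · exact hq13 (sub_right_injective h').symm
    · exact hq23 (sub_right_injective (h.trans h'.symm))

private lemma TS_sup_top (q₁ q₂ q₃ w : EuclideanSpace ℝ (Fin 3))
    (hq12 : q₁ ≠ q₂) (hq13 : q₁ ≠ q₃) (hq23 : q₂ ≠ q₃)
    (h1 : dist w q₁ = 1) (h2 : dist w q₂ = 1) (h3 : dist w q₃ = 1) :
    TS q₁ w ⊔ TS q₂ w ⊔ TS q₃ w = ⊤ := by
  rw [← Submodule.orthogonal_eq_bot_iff]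
  unfold TS
  rw [← Submodule.inf_orthogonal, ← Submodule.inf_orthogonal,
    Submodule.orthogonal_orthogonal, Submodule.orthogonal_orthogonal,
    Submodule.orthogonal_orthogonal]
  exact span_inf_bot q₁ q₂ q₃ w hq12 hq13 hq23 h1 h2 h3

/-- A submodule product is linearly equivalent to the product of the submodules. -/
private def subProdEquiv {R M N : Type*} [CommRing R] [AddCommGroup M] [AddCommGroup N]
    [Module R M] [Module R N] (p : Submodule R M) (q : Submodule R N) :
    (p.prod q) ≃ₗ[R] p × q where
  toFun z := (⟨z.1.1, z.2.1⟩, ⟨z.1.2, z.2.2⟩)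
  map_add' _ _ := rfl
  map_smul' _ _ := rfl
  invFun y := ⟨(y.1, y.2), ⟨y.1.2, y.2.2⟩⟩
  left_inv _ := rfl
  right_inv _ := rfl

private lemma finrank_TS (q w : EuclideanSpace ℝ (Fin 3)) (h : dist w q = 1) :
    Module.finrank ℝ (TS q w) = 2 := by
  have hne : w - q ≠ 0 := by
    intro h0
    rw [sub_eq_zero] at h0
    rw [h0, dist_self] at h
    norm_num at h
  have hspan : Module.finrank ℝ (Submodule.span ℝ ({w - q} : Set (EuclideanSpace ℝ (Fin 3)))) = 1 :=
    finrank_span_singleton hne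
  have := Submodule.finrank_add_finrank_orthogonal
    (K := Submodule.span ℝ ({w - q} : Set (EuclideanSpace ℝ (Fin 3))))
  rw [hspan, finrank_euclideanSpace_fin] at this
  unfold TS
  omega

private lemma finrank_TZ (q w₁ w₂ : EuclideanSpace ℝ (Fin 3))
    (h1 : dist w₁ q = 1) (h2 : dist w₂ q = 1) :
    Module.finrank ℝ (TZ q w₁ w₂) = 4 := by
  unfold TZ
  rw [(subProdEquiv (TS q w₁) (TS q w₂)).finrank_eq, Module.finrank_prod,
    finrank_TS q w₁ h1, finrank_TS q w₂ h2]

/-- If `W ⊆ ℝ⁶` is a five-dimensional variety that is smooth at `w`, with tangent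
space `T` there, and `w` lies on three double-spheres with distinct centers, then at
least one of the double-spheres has tangent space meeting `T` in dimension ≤ 3. -/
theorem stmt5 (q₁ q₂ q₃ : EuclideanSpace ℝ (Fin 3))
    (hq12 : q₁ ≠ q₂) (hq13 : q₁ ≠ q₃) (hq23 : q₂ ≠ q₃)
    (w₁ w₂ : EuclideanSpace ℝ (Fin 3))
    (h1 : dist w₁ q₁ = 1 ∧ dist w₂ q₁ = 1)
    (h2 : dist w₁ q₂ = 1 ∧ dist w₂ q₂ = 1)
    (h3 : dist w₁ q₃ = 1 ∧ dist w₂ q₃ = 1)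
    (T : Submodule ℝ (EuclideanSpace ℝ (Fin 3) × EuclideanSpace ℝ (Fin 3)))
    (hT : Module.finrank ℝ ↥T = 5) :
    Module.finrank ℝ ↥(TZ q₁ w₁ w₂ ⊓ T) ≤ 3 ∨
    Module.finrank ℝ ↥(TZ q₂ w₁ w₂ ⊓ T) ≤ 3 ∨
    Module.finrank ℝ ↥(TZ q₃ w₁ w₂ ⊓ T) ≤ 3 := by
  by_contra hcon
  push_neg at hcon
  obtain ⟨hc1, hc2, hc3⟩ := hcon
  -- Each TZ qᵢ w₁ w₂ is contained in T
  have hle : ∀ q : EuclideanSpace ℝ (Fin 3), dist w₁ q = 1 → dist w₂ q = 1 →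
      3 < Module.finrank ℝ ↥(TZ q w₁ w₂ ⊓ T) → TZ q w₁ w₂ ≤ T := by
    intro q hd1 hd2 hgt
    have h4 : Module.finrank ℝ (TZ q w₁ w₂) = 4 := finrank_TZ q w₁ w₂ hd1 hd2
    have heq : TZ q w₁ w₂ ⊓ T = TZ q w₁ w₂ :=
      Submodule.eq_of_le_of_finrank_le inf_le_left (by omega)
    rw [← heq]
    exact inf_le_right
  have hle1 := hle q₁ h1.1 h1.2 hc1
  have hle2 := hle q₂ h2.1 h2.2 hc2
  have hle3 := hle q₃ h3.1 h3.2 hc3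
  -- Then T = ⊤
  have hsup1 := TS_sup_top q₁ q₂ q₃ w₁ hq12 hq13 hq23 h1.1 h2.1 h3.1
  have hsup2 := TS_sup_top q₁ q₂ q₃ w₂ hq12 hq13 hq23 h1.2 h2.2 h3.2
  have hTtop : T = ⊤ := by
    rw [eq_top_iff]
    rintro ⟨x, y⟩ -
    have hx : x ∈ TS q₁ w₁ ⊔ TS q₂ w₁ ⊔ TS q₃ w₁ := hsup1 ▸ Submodule.mem_top
    have hy : y ∈ TS q₁ w₂ ⊔ TS q₂ w₂ ⊔ TS q₃ w₂ := hsup2 ▸ Submodule.mem_top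
    obtain ⟨x12, hx12, x3, hx3, rfl⟩ := Submodule.mem_sup.mp hx
    obtain ⟨x1, hx1, x2, hx2, rfl⟩ := Submodule.mem_sup.mp hx12
    obtain ⟨y12, hy12, y3, hy3, rfl⟩ := Submodule.mem_sup.mp hy
    obtain ⟨y1, hy1, y2, hy2, rfl⟩ := Submodule.mem_sup.mp hy12
    have m1 : ((x1, y1) : EuclideanSpace ℝ (Fin 3) × EuclideanSpace ℝ (Fin 3)) ∈ T :=
      hle1 ⟨hx1, hy1⟩
    have m2 : ((x2, y2) : EuclideanSpace ℝ (Fin 3) × EuclideanSpace ℝ (Fin 3)) ∈ T :=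
      hle2 ⟨hx2, hy2⟩
    have m3 : ((x3, y3) : EuclideanSpace ℝ (Fin 3) × EuclideanSpace ℝ (Fin 3)) ∈ T :=
      hle3 ⟨hx3, hy3⟩
    have := T.add_mem (T.add_mem m1 m2) m3
    simpa using this
  have h6 : Module.finrank ℝ ↥T = 6 := by
    rw [hTtop, finrank_top, Module.finrank_prod, finrank_euclideanSpace_fin]
  omega
end
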